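/- arXiv:quant-ph/0307149 — 2 statements merged into one kernel-verified Lean document; each statement's English description precedes it below -/
import Mathlib

section
/- Fix an integer d ≥ 3. There exists a constant c > 0 (depending only on d) such that, as N → ∞ through d-th powers, with M = N^{1/d} and L = ⌊√N/100⌋, for every start vertex h, a snake X drawn from the grid snake distribution D_{h,L} on {1,…,M}^d is c-sparse with probability 1 − o(1). -/
/-- Move from `a` toward `u` along a coordinate line, by at most `s` unit steps,
stalling at `u` once it is reached. -/
def approachN (a u s : ℕ) : ℕ :=
  if a ≤ u then min (a + s) u else max (a - s) u

/-- The macro-step chain on the grid `{0,…,M-1}^d`: `z 0 = h`, and `z (T+1)` equals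
`z T` with coordinate `T mod d` replaced by the fresh uniform value `u T`. -/
def macroChainN {d : ℕ} (h : Fin d → ℕ) (u : ℕ → ℕ) : ℕ → (Fin d → ℕ)
  | 0 => h
  | T + 1 => fun i => if (i : ℕ) = T % d then u T else macroChainN h u T i

/-- The grid snake process with start `h`, driven by the fresh values `u`: during
macro-block `T` (micro-steps `MT, …, MT+M-1`) the snake moves monotonically along
coordinate `T mod d` from its block-start value toward `u T`, stalling once reached. -/
def gridSnake {d : ℕ} (M : ℕ) (h : Fin d → ℕ) (u : ℕ → ℕ) (t : ℕ) : Fin d → ℕ :=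
  fun i =>
    if (i : ℕ) = (t / M) % d then
      approachN (macroChainN h u (t / M) i) (u (t / M)) (t % M)
    else macroChainN h u (t / M) i

/-- Extend a finite string of uniform values in `{0,…,M-1}` to `ℕ → ℕ` (by `0`). -/
def extValsN {s M : ℕ} (ω : Fin s → Fin M) : ℕ → ℕ :=
  fun T => if hT : T < s then (ω ⟨T, hT⟩ : ℕ) else 0

/-- `delta d x v i` is the smallest `k` such that `x` agrees with `v` on every
coordinate outside `{i, i-1, …, i-k+1}` (indices mod `d`). -/
noncomputable def delta {α : Type*} (d : ℕ) (x v : Fin d → α) (i : ℕ) : ℕ :=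
  sInf {k | ∀ j : Fin d, (∀ l < k, (j : ℕ) ≠ (i + d - l) % d) → x j = v j}

/-- A grid snake `x_0, …, x_{L-1}` in `{0,…,M-1}^d` (with `N = M^d`) is `c`-sparse if
for every vertex `v` and every `k ≤ d`,
`|{t < L : Δ(x_t, v, ⌊t/M⌋ mod d) = k}| ≤ (c·log N)·(M + L/M^{d-k})`. -/
noncomputable def IsGridSparse (c : ℝ) (d M L : ℕ) (x : ℕ → Fin d → ℕ) : Prop :=
  ∀ v : Fin d → ℕ, (∀ i, v i < M) → ∀ k ≤ d,
    (((Finset.range L).filter (fun t => delta d (x t) v ((t / M) % d) = k)).card : ℝ)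
      ≤ c * Real.log ((M : ℝ) ^ d) * ((M : ℝ) + (L : ℝ) / (M : ℝ) ^ (d - k))

/-- Probability of an event on a finite sample space, under the uniform distribution. -/
noncomputable def unifPr {Ω : Type*} [Fintype Ω] (P : Ω → Prop) : ℝ :=
  (Nat.card {ω : Ω // P ω} : ℝ) / (Fintype.card Ω : ℝ)


/-!
From block `d` on, every coordinate of the snake other than the moving one is the fresh value
of one of the `d` preceding blocks. So a time of block `T` at `delta`-level `k ≥ 1` forces
`d - k` fresh values to equal prescribed coordinates of `v`, an event of probability
`M ^ (k - d)`; at level `0` either `u_T` is prescribed as well (probability `M ^ (-d)`, and then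
the whole block may count), or the moving coordinate meets `v` at most once in the block.
The constraint sets of blocks in one residue class mod `d + 1` are disjoint, so a first moment
bound on `2 ^ Y`, `Y` the number of these events that occur, shows that more than
`O(d log M + L / M ^ (d - k + 1))` of them occur with probability at most `M ^ (-2d)`.
A union bound over `v`, the level and the residue class then leaves failure probability
`O(d² / M ^ d)`.
-/

open Finset

/-- The block before block `T` in which coordinate `j` was last refreshed. -/
def lastRefresh (d T j : ℕ) : ℕ := T - 1 - (T - 1 - j) % d

lemma lastRefresh_mod {d j T : ℕ} (hj : j < d) (hT : d ≤ T) : lastRefresh d T j % d = j := by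
  have := Nat.div_add_mod (T - 1 - j) d
  have h : lastRefresh d T j = j + d * ((T - 1 - j) / d) := by unfold lastRefresh; omega
  rw [h, Nat.add_mul_mod_self_left, Nat.mod_eq_of_lt hj]

lemma lastRefresh_lt {d T j : ℕ} (hT : 1 ≤ T) : lastRefresh d T j < T := by
  unfold lastRefresh; omega

lemma sub_le_lastRefresh {d T j : ℕ} (hd : 0 < d) : T - d ≤ lastRefresh d T j := by
  have := Nat.mod_lt (T - 1 - j) hd
  unfold lastRefresh; omega

lemma macroChainN_add_of_mod_eq {d : ℕ} (h : Fin d → ℕ) (u : ℕ → ℕ) {j : Fin d} {T : ℕ}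
    (hj : (j : ℕ) = T % d) {s : ℕ} (hs : s < d) : macroChainN h u (T + 1 + s) j = u T := by
  induction s with
  | zero => simp [macroChainN, hj]
  | succ n ih =>
    rw [← add_assoc, macroChainN]
    dsimp only
    rw [if_neg, ih (by omega)]
    intro hmod
    have hdvd : d ∣ T + 1 + n - T := (Nat.modEq_iff_dvd' (by omega)).mp (hj.symm.trans hmod)
    have := Nat.le_of_dvd (by omega) hdvd
    omega

lemma macroChainN_eq_lastRefresh {d : ℕ} (hd : 0 < d) (h : Fin d → ℕ) (u : ℕ → ℕ)
    (j : Fin d) {T : ℕ} (hT : d ≤ T) : macroChainN h u T j = u (lastRefresh d T j) := by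
  have := Nat.mod_le (T - 1 - j) d
  have hT' : T = lastRefresh d T j + 1 + (T - 1 - j) % d := by
    unfold lastRefresh; have := j.isLt; omega
  conv_lhs => rw [hT']
  exact macroChainN_add_of_mod_eq h u (lastRefresh_mod j.isLt hT).symm (Nat.mod_lt _ hd)

def outsideWindow (d i k : ℕ) : Finset (Fin d) :=
  univ.filter fun j => ∀ l < k, (j : ℕ) ≠ (i + d - l) % d

lemma outsideWindow_eq_empty {d : ℕ} (hd : 0 < d) (i : ℕ) : outsideWindow d i d = ∅ := by
  refine filter_false_of_mem fun j _ hj => hj ((i + d - j) % d) (Nat.mod_lt _ hd) ?_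
  have := Nat.div_add_mod (i + d - j) d
  have h : i + d - (i + d - j) % d = j + d * ((i + d - j) / d) := by omega
  rw [h, Nat.add_mul_mod_self_left, Nat.mod_eq_of_lt j.isLt]

lemma eq_of_delta_eq {α : Type*} {d : ℕ} (hd : 0 < d) {x v : Fin d → α} {i k : ℕ}
    (hδ : delta d x v i = k) {j : Fin d} (hj : j ∈ outsideWindow d i k) : x j = v j := by
  have hne : {k | ∀ j : Fin d, (∀ l < k, (j : ℕ) ≠ (i + d - l) % d) → x j = v j}.Nonempty := by
    refine ⟨d, fun j hj => absurd (show j ∈ outsideWindow d i d from ?_) ?_⟩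
    · exact mem_filter.mpr ⟨mem_univ j, hj⟩
    · simp [outsideWindow_eq_empty hd]
  subst hδ
  exact Nat.sInf_mem hne j (mem_filter.mp hj).2

lemma le_card_outsideWindow {d : ℕ} (hd : 0 < d) (i k : ℕ) :
    d - k ≤ #(outsideWindow d i k) := by
  set window := (range k).image fun l => (⟨(i + d - l) % d, Nat.mod_lt _ hd⟩ : Fin d)
  have hsub : univ \ window ⊆ outsideWindow d i k := by
    intro j hj
    refine mem_filter.mpr ⟨mem_univ _, fun l hl hjl => (mem_sdiff.mp hj).2 ?_⟩
    exact mem_image.mpr ⟨l, mem_range.mpr hl, Fin.ext hjl.symm⟩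
  have hwindow : #window ≤ k := card_image_le.trans (card_range k).le
  have := card_le_card hsub
  rw [card_sdiff_of_subset (subset_univ _), card_univ, Fintype.card_fin] at this
  omega

lemma val_ne_of_mem_outsideWindow {d i k : ℕ} (hi : i < d) (hk : 1 ≤ k) {j : Fin d}
    (hj : j ∈ outsideWindow d i k) : (j : ℕ) ≠ i := by
  simpa [Nat.mod_eq_of_lt hi] using (mem_filter.mp hj).2 0 hk

/-- The blocks whose fresh values are, during block `T`, the coordinates outside the window of
size `k` ending at `T mod d`. -/
def refreshTimes (d T k : ℕ) : Finset ℕ :=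
  (outsideWindow d (T % d) k).image fun j : Fin d => lastRefresh d T j

lemma le_card_refreshTimes {d T : ℕ} (hd : 0 < d) (hT : d ≤ T) (k : ℕ) :
    d - k ≤ #(refreshTimes d T k) := by
  rw [refreshTimes, card_image_of_injOn]
  · exact le_card_outsideWindow hd _ k
  · intro j₁ _ j₂ _ hj
    exact Fin.ext <| by
      rw [← lastRefresh_mod j₁.isLt hT, ← lastRefresh_mod j₂.isLt hT]
      exact congrArg (· % d) hj

lemma mem_refreshTimes_bounds {d T k s : ℕ} (hd : 0 < d) (hT : 1 ≤ T)
    (hs : s ∈ refreshTimes d T k) : T - d ≤ s ∧ s < T := by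
  obtain ⟨j, _, rfl⟩ := mem_image.mp hs
  exact ⟨sub_le_lastRefresh hd, lastRefresh_lt hT⟩

/-- The `r`-th family of constraint sets. A time of block `T` at `delta`-level `k ≥ 1` fixes the
fresh values in `refreshTimes d T k`, which is family `d - k`; family `d` adds `T` itself, for
times at level `0` in a block with `u_T = v_{T mod d}`. -/
def constraintSet (d T r : ℕ) : Finset ℕ :=
  if r = d then insert T (refreshTimes d T 1) else refreshTimes d T (d - r)

lemma le_card_constraintSet {d T r : ℕ} (hd : 0 < d) (hT : d ≤ T) (hrd : r ≤ d) :
    r ≤ #(constraintSet d T r) := by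
  unfold constraintSet
  split_ifs with h
  · have hT' : T ∉ refreshTimes d T 1 := fun hmem =>
      (mem_refreshTimes_bounds hd (by omega) hmem).2.false
    have := le_card_refreshTimes hd hT 1
    rw [card_insert_of_notMem hT']
    omega
  · have := le_card_refreshTimes hd hT (d - r)
    omega

lemma mem_constraintSet_bounds {d T r s : ℕ} (hd : 0 < d) (hT : 1 ≤ T)
    (hs : s ∈ constraintSet d T r) : T - d ≤ s ∧ s ≤ T := by
  unfold constraintSet at hs
  split_ifs at hs
  · rcases mem_insert.mp hs with rfl | hs
    · omega
    · have := mem_refreshTimes_bounds hd hT hs; omega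
  · have := mem_refreshTimes_bounds hd hT hs; omega

lemma disjoint_constraintSet {d T T' r : ℕ} (hd : 0 < d) (hT : 1 ≤ T) (hT' : 1 ≤ T')
    (hmod : T % (d + 1) = T' % (d + 1)) (hne : T ≠ T') :
    Disjoint (constraintSet d T r) (constraintSet d T' r) := by
  rw [disjoint_left]
  intro s hs hs'
  have := mem_constraintSet_bounds hd hT hs
  have := mem_constraintSet_bounds hd hT' hs'
  rcases Nat.lt_or_gt_of_ne hne with hlt | hlt
  · have := Nat.le_of_dvd (by omega) ((Nat.modEq_iff_dvd' hlt.le).mp hmod)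
    omega
  · have := Nat.le_of_dvd (by omega) ((Nat.modEq_iff_dvd' hlt.le).mp hmod.symm)
    omega

lemma card_filter_extValsN_mul_pow_le {L M : ℕ} (B : Finset ℕ) (hB : ∀ s ∈ B, s < L)
    (g : ℕ → ℕ) :
    #{ω : Fin L → Fin M | ∀ s ∈ B, extValsN ω s = g s} * M ^ #B ≤ M ^ L := by
  set S : Fin L → Finset (Fin M) := fun t =>
    if (t : ℕ) ∈ B then univ.filter fun a : Fin M => (a : ℕ) = g t else univ
  have hsub : ({ω | ∀ s ∈ B, extValsN ω s = g s} : Finset (Fin L → Fin M)) ⊆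
      Fintype.piFinset S := by
    intro ω hω
    refine Fintype.mem_piFinset.mpr fun t => ?_
    by_cases ht : (t : ℕ) ∈ B
    · simpa [S, ht, extValsN] using (mem_filter.mp hω).2 t ht
    · simp [S, ht]
  have hS : ∀ t, #(S t) ≤ if (t : ℕ) ∈ B then 1 else M := by
    intro t
    by_cases ht : (t : ℕ) ∈ B
    · simp only [S, ht, if_true]
      exact card_le_one.mpr fun a ha b hb => Fin.ext <| by
        rw [(mem_filter.mp ha).2, (mem_filter.mp hb).2]
    · simp [S, ht]
  have hB' : M ^ #B = ∏ s ∈ range L, if s ∈ B then M else 1 := by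
    rw [prod_ite_mem, inter_eq_right.mpr fun s hs => mem_range.mpr (hB s hs), prod_const]
  calc #{ω : Fin L → Fin M | ∀ s ∈ B, extValsN ω s = g s} * M ^ #B
      ≤ (∏ t, #(S t)) * M ^ #B := by
        rw [← Fintype.card_piFinset]; gcongr
    _ ≤ (∏ s ∈ range L, if s ∈ B then 1 else M) * M ^ #B := by
        rw [← Fin.prod_univ_eq_prod_range (fun s => if s ∈ B then 1 else M)]
        gcongr with t; exact hS t
    _ = ∏ _s ∈ range L, M := by
        rw [hB', ← prod_mul_distrib]
        exact prod_congr rfl fun s _ => by split_ifs <;> simp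
    _ = M ^ L := by rw [prod_const, card_range]

/-- Markov's inequality for `2 ^ Y`, where `Y` counts the events that occur: expanding
`2 ^ Y` over subsets of events needs only upper bounds on the joint occurrences. -/
lemma card_many_events_mul_two_pow_le {Ω ι : Type*} [Fintype Ω] (s : Finset ι)
    (E : ι → Ω → Prop) [∀ i ω, Decidable (E i ω)] (p : ℝ)
    (hE : ∀ A ⊆ s, (#{ω : Ω | ∀ i ∈ A, E i ω} : ℝ) ≤ Fintype.card Ω * p ^ #A) (m : ℕ) :
    (#{ω : Ω | m ≤ #(s.filter fun i => E i ω)} : ℝ) * 2 ^ m ≤ Fintype.card Ω * (1 + p) ^ #s := by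
  classical
  have hpow : ∀ ω, 2 ^ #(s.filter fun i => E i ω)
      = ∑ A ∈ s.powerset, if ∀ i ∈ A, E i ω then 1 else 0 := by
    intro ω
    rw [← card_powerset, ← card_filter]
    congr 1
    ext A
    simp only [mem_powerset, mem_filter, subset_iff]
    exact ⟨fun h => ⟨fun i hi => (h hi).1, fun i hi => (h hi).2⟩, fun h i hi => ⟨h.1 hi, h.2 i hi⟩⟩
  have hmarkov : #{ω : Ω | m ≤ #(s.filter fun i => E i ω)} * 2 ^ m
      ≤ ∑ A ∈ s.powerset, #{ω : Ω | ∀ i ∈ A, E i ω} := by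
    calc #{ω : Ω | m ≤ #(s.filter fun i => E i ω)} * 2 ^ m
        = ∑ ω ∈ {ω : Ω | m ≤ #(s.filter fun i => E i ω)}, 2 ^ m := by rw [sum_const, smul_eq_mul]
      _ ≤ ∑ ω ∈ {ω : Ω | m ≤ #(s.filter fun i => E i ω)}, 2 ^ #(s.filter fun i => E i ω) :=
          sum_le_sum fun ω hω => Nat.pow_le_pow_right two_pos (mem_filter.mp hω).2
      _ ≤ ∑ ω, 2 ^ #(s.filter fun i => E i ω) := sum_le_sum_of_subset (subset_univ _)
      _ = ∑ A ∈ s.powerset, #{ω : Ω | ∀ i ∈ A, E i ω} := by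
          rw [sum_congr rfl fun ω _ => hpow ω, sum_comm]
          simp only [card_filter]
  calc (#{ω : Ω | m ≤ #(s.filter fun i => E i ω)} : ℝ) * 2 ^ m
      ≤ ∑ A ∈ s.powerset, (#{ω : Ω | ∀ i ∈ A, E i ω} : ℝ) := by exact_mod_cast hmarkov
    _ ≤ ∑ A ∈ s.powerset, Fintype.card Ω * p ^ #A :=
        sum_le_sum fun A hA => hE A (mem_powerset.mp hA)
    _ = Fintype.card Ω * (1 + p) ^ #s := by
        rw [← mul_sum, add_comm, ← sum_pow_mul_eq_add_pow]
        simp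

lemma one_add_inv_pow_pow_le {M r k n : ℕ} (hM : 0 < M) (hk : k ≤ n) :
    (1 + ((M : ℝ) ^ r)⁻¹) ^ k ≤ 2 ^ (2 * (n / M ^ r) + 2) := by
  have hMr : (0 : ℝ) < (M : ℝ) ^ r := by positivity
  have hkp : (k : ℝ) * ((M : ℝ) ^ r)⁻¹ ≤ (n / M ^ r : ℕ) + 1 := by
    have hn : n < M ^ r * (n / M ^ r + 1) := Nat.lt_mul_div_succ n (by positivity)
    have hn' : (n : ℝ) < (M : ℝ) ^ r * ((n / M ^ r : ℕ) + 1) := by exact_mod_cast hn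
    rw [mul_inv_le_iff₀ hMr]
    linarith [show (k : ℝ) ≤ n by exact_mod_cast hk]
  calc (1 + ((M : ℝ) ^ r)⁻¹) ^ k ≤ Real.exp (((M : ℝ) ^ r)⁻¹) ^ k := by
        gcongr; linarith [Real.add_one_le_exp ((M : ℝ) ^ r)⁻¹]
    _ = Real.exp (k * ((M : ℝ) ^ r)⁻¹) := by rw [← Real.exp_nat_mul]
    _ ≤ Real.exp 1 ^ (n / M ^ r + 1) := by
        rw [← Real.exp_nat_mul, mul_one]
        exact Real.exp_le_exp.mpr (by push_cast; linarith)
    _ ≤ 4 ^ (n / M ^ r + 1) := by gcongr; linarith [Real.exp_one_lt_d9]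
    _ = 2 ^ (2 * (n / M ^ r) + 2) := by rw [show (4 : ℝ) = 2 ^ 2 by norm_num, ← pow_mul]; ring_nf

/-- With `n` events, each set `A` of which occurs jointly with probability at most
`M ^ (-r #A)`, more than this many of them occur with probability at most `M ^ (-2d)`. -/
def eventThreshold (d M n r : ℕ) : ℕ := 2 * d * (Nat.log 2 M + 1) + 2 * (n / M ^ r) + 2

lemma card_many_events_le {Ω ι : Type*} [Fintype Ω] (s : Finset ι)
    (E : ι → Ω → Prop) [∀ i ω, Decidable (E i ω)] {d M n r : ℕ} (hM : 2 ≤ M) (hs : #s ≤ n)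
    (hE : ∀ A ⊆ s, (#{ω | ∀ i ∈ A, E i ω} : ℝ) ≤ Fintype.card Ω * ((M : ℝ) ^ r)⁻¹ ^ #A) :
    (#{ω : Ω | eventThreshold d M n r ≤ #(s.filter fun i => E i ω)} : ℝ)
      ≤ Fintype.card Ω / (M : ℝ) ^ (2 * d) := by
  set X := (#{ω : Ω | eventThreshold d M n r ≤ #(s.filter fun i => E i ω)} : ℝ)
  have hmarkov := card_many_events_mul_two_pow_le s E _ hE (eventThreshold d M n r)
  have hgrowth := one_add_inv_pow_pow_le (r := r) (by omega : 0 < M) hs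
  have hlog : (M : ℝ) ^ (2 * d) ≤ 2 ^ (2 * d * (Nat.log 2 M + 1)) := by
    have h := Nat.pow_le_pow_left (Nat.lt_pow_succ_log_self one_lt_two M).le (2 * d)
    rw [← pow_mul, mul_comm (Nat.log 2 M).succ] at h
    exact_mod_cast h
  have hsplit : (2 : ℝ) ^ eventThreshold d M n r
      = 2 ^ (2 * d * (Nat.log 2 M + 1)) * 2 ^ (2 * (n / M ^ r) + 2) := by
    rw [eventThreshold, ← pow_add, add_assoc]
  rw [le_div_iff₀ (by positivity)]
  refine le_of_mul_le_mul_right ?_ (by positivity : (0 : ℝ) < 2 ^ (2 * (n / M ^ r) + 2))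
  calc X * (M : ℝ) ^ (2 * d) * 2 ^ (2 * (n / M ^ r) + 2)
      ≤ X * 2 ^ eventThreshold d M n r := by
        rw [hsplit, ← mul_assoc]; gcongr
    _ ≤ Fintype.card Ω * 2 ^ (2 * (n / M ^ r) + 2) := hmarkov.trans (by gcongr)

lemma approachN_inj_of_ne {a u s s' w : ℕ} (hw : w ≠ u) (hs : approachN a u s = w)
    (hs' : approachN a u s' = w) : s = s' := by
  unfold approachN at hs hs'
  split_ifs at hs hs' <;> omega

/-- The target value of fresh value `s`: the coordinate of `v` that block `s` refreshes. -/
def cyclicPattern {d : ℕ} (hd : 0 < d) (v : Fin d → ℕ) (s : ℕ) : ℕ := v ⟨s % d, Nat.mod_lt s hd⟩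

def ConstraintEvent {d : ℕ} (hd : 0 < d) (v : Fin d → ℕ) (r T : ℕ) (u : ℕ → ℕ) : Prop :=
  ∀ s ∈ constraintSet d T r, u s = cyclicPattern hd v s

instance {d : ℕ} (hd : 0 < d) (v : Fin d → ℕ) (r T : ℕ) (u : ℕ → ℕ) :
    Decidable (ConstraintEvent hd v r T u) := by
  unfold ConstraintEvent; infer_instance

lemma eq_cyclicPattern_of_agree {d M : ℕ} (hd : 0 < d) (h : Fin d → ℕ) (u : ℕ → ℕ)
    (v : Fin d → ℕ) {k T t : ℕ} (hk : 1 ≤ k) (hT : d ≤ T) (ht : t / M = T)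
    (hagree : ∀ j ∈ outsideWindow d (T % d) k, gridSnake M h u t j = v j) :
    ∀ s ∈ refreshTimes d T k, u s = cyclicPattern hd v s := by
  intro s hs
  obtain ⟨j, hj, rfl⟩ := mem_image.mp hs
  have hjT : (j : ℕ) ≠ T % d := val_ne_of_mem_outsideWindow (Nat.mod_lt _ hd) hk hj
  have hpattern : cyclicPattern hd v (lastRefresh d T j) = v j := by
    simp only [cyclicPattern, lastRefresh_mod j.isLt hT]
  rw [hpattern, ← macroChainN_eq_lastRefresh hd h u j hT, ← hagree j hj, gridSnake, ht, if_neg hjT]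

noncomputable def levelTimes (d M L : ℕ) (x : ℕ → Fin d → ℕ) (v : Fin d → ℕ) (k : ℕ) : Finset ℕ :=
  (range L).filter fun t => delta d (x t) v ((t / M) % d) = k

lemma card_filter_div_eq_le (s : Finset ℕ) {M : ℕ} (hM : 0 < M) (T : ℕ) :
    #(s.filter fun t => t / M = T) ≤ M := by
  have hsub : s.filter (fun t => t / M = T) ⊆ Ico (M * T) (M * T + M) := by
    intro t ht
    obtain rfl := (mem_filter.mp ht).2
    have := Nat.lt_mul_div_succ t hM
    exact mem_Ico.mpr ⟨Nat.mul_div_le t M, by linarith⟩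
  simpa using card_le_card hsub

lemma card_le_sum_card_blocks {s : Finset ℕ} {L M : ℕ} (hs : s ⊆ range L) (hM : 0 < M) (d : ℕ) :
    #s ≤ d * M + ∑ T ∈ Ico d (L / M + 1), #(s.filter fun t => t / M = T) := by
  have hcover : s ⊆ (range d ∪ Ico d (L / M + 1)).biUnion fun T => s.filter fun t => t / M = T := by
    intro t ht
    have : t / M ≤ L / M := Nat.div_le_div_right (mem_range.mp (hs ht)).le
    refine mem_biUnion.mpr ⟨t / M, ?_, mem_filter.mpr ⟨ht, rfl⟩⟩
    simp only [mem_union, mem_range, mem_Ico]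
    omega
  calc #s ≤ ∑ T ∈ range d ∪ Ico d (L / M + 1), #(s.filter fun t => t / M = T) :=
        (card_le_card hcover).trans card_biUnion_le
    _ = ∑ T ∈ range d, #(s.filter fun t => t / M = T)
        + ∑ T ∈ Ico d (L / M + 1), #(s.filter fun t => t / M = T) :=
        sum_union (disjoint_left.mpr fun T h₁ h₂ => by simp at h₁ h₂; omega)
    _ ≤ d * M + ∑ T ∈ Ico d (L / M + 1), #(s.filter fun t => t / M = T) := by
        gcongr
        simpa using sum_le_sum fun T (_ : T ∈ range d) => card_filter_div_eq_le s hM T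

lemma constraintSet_sub {d T k : ℕ} (hk : 1 ≤ k) (hkd : k ≤ d) :
    constraintSet d T (d - k) = refreshTimes d T k := by
  rw [constraintSet, if_neg (by omega), Nat.sub_sub_self hkd]

lemma constraintSet_self (d T : ℕ) :
    constraintSet d T d = insert T (constraintSet d T (d - 1)) := by
  rcases Nat.eq_zero_or_pos d with rfl | hd
  · simp [constraintSet]
  · rw [constraintSet_sub le_rfl hd, constraintSet, if_pos rfl]

lemma agree_of_mem_levelTimes {d M L k t : ℕ} (hd : 0 < d) {x : ℕ → Fin d → ℕ}
    {v : Fin d → ℕ} (ht : t ∈ levelTimes d M L x v k) {j : Fin d}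
    (hj : j ∈ outsideWindow d ((t / M) % d) k) : x t j = v j :=
  eq_of_delta_eq hd (mem_filter.mp ht).2 hj

lemma card_block_levelTimes_le_of_pos {d M L k T : ℕ} (hd : 0 < d) (hM : 0 < M)
    (h : Fin d → ℕ) (u : ℕ → ℕ) (v : Fin d → ℕ) (hk : 1 ≤ k) (hkd : k ≤ d) (hT : d ≤ T) :
    #((levelTimes d M L (gridSnake M h u) v k).filter fun t => t / M = T)
      ≤ M * if ConstraintEvent hd v (d - k) T u then 1 else 0 := by
  split_ifs with hE
  · simpa using card_filter_div_eq_le _ hM T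
  · refine (card_eq_zero.mpr (filter_eq_empty_iff.mpr fun t ht htT => hE ?_)).le
    rw [ConstraintEvent, constraintSet_sub hk hkd]
    refine eq_cyclicPattern_of_agree hd h u v hk hT htT fun j hj => ?_
    exact agree_of_mem_levelTimes hd ht (htT ▸ hj)

/-- At level `0` the snake sits exactly on `v`. Unless `u_T` itself is `v`'s coordinate
(family `d`), the moving coordinate passes through `v`'s value at most once in the block. -/
lemma card_block_levelTimes_zero_le {d M L T : ℕ} (hd : 0 < d) (hM : 0 < M)
    (h : Fin d → ℕ) (u : ℕ → ℕ) (v : Fin d → ℕ) (hT : d ≤ T) :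
    #((levelTimes d M L (gridSnake M h u) v 0).filter fun t => t / M = T)
      ≤ (if ConstraintEvent hd v (d - 1) T u then 1 else 0)
        + M * if ConstraintEvent hd v d T u then 1 else 0 := by
  set block := (levelTimes d M L (gridSnake M h u) v 0).filter fun t => t / M = T
  have hagree : ∀ t ∈ block, ∀ j, gridSnake M h u t j = v j := fun t ht j =>
    agree_of_mem_levelTimes hd (mem_filter.mp ht).1 (mem_filter.mpr ⟨mem_univ j, by simp⟩)
  have hrefresh : ∀ t ∈ block, ConstraintEvent hd v (d - 1) T u := by
    intro t ht
    rw [ConstraintEvent, constraintSet_sub le_rfl hd]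
    exact eq_cyclicPattern_of_agree hd h u v le_rfl hT (mem_filter.mp ht).2 fun j _ => hagree t ht j
  by_cases hEd : ConstraintEvent hd v d T u
  · simpa [hEd] using (card_filter_div_eq_le _ hM T).trans (Nat.le_add_left M _)
  by_cases hE : ConstraintEvent hd v (d - 1) T u
  · simp only [hE, hEd, if_true, if_false, mul_zero, add_zero]
    have hne : cyclicPattern hd v T ≠ u T := fun heq => hEd fun s hs => by
      rw [constraintSet_self] at hs
      rcases mem_insert.mp hs with rfl | hs
      · exact heq.symm
      · exact hE s hs
    set i : Fin d := ⟨T % d, Nat.mod_lt T hd⟩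
    have hmoving : ∀ t ∈ block,
        approachN (macroChainN h u T i) (u T) (t % M) = cyclicPattern hd v T := by
      intro t ht
      have := hagree t ht i
      rwa [gridSnake, (mem_filter.mp ht).2, if_pos rfl] at this
    refine card_le_one.mpr fun t ht t' ht' => ?_
    rw [← Nat.div_add_mod t M, ← Nat.div_add_mod t' M, (mem_filter.mp ht).2,
      (mem_filter.mp ht').2, approachN_inj_of_ne hne (hmoving t ht) (hmoving t' ht')]
  · simp only [hE, hEd, if_false, mul_zero, add_zero, Nat.le_zero, card_eq_zero]
    exact eq_empty_of_forall_notMem fun t ht => hE (hrefresh t ht)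

lemma card_levelTimes_le_of_pos {d M L k : ℕ} (hd : 0 < d) (hM : 0 < M) (h : Fin d → ℕ)
    (u : ℕ → ℕ) (v : Fin d → ℕ) (hk : 1 ≤ k) (hkd : k ≤ d) :
    #(levelTimes d M L (gridSnake M h u) v k)
      ≤ d * M + M * #((Ico d (L / M + 1)).filter fun T => ConstraintEvent hd v (d - k) T u) := by
  refine (card_le_sum_card_blocks (filter_subset _ _) hM d).trans ?_
  rw [card_filter, mul_sum]
  gcongr with T hT
  exact card_block_levelTimes_le_of_pos hd hM h u v hk hkd (mem_Ico.mp hT).1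

lemma card_levelTimes_zero_le {d M L : ℕ} (hd : 0 < d) (hM : 0 < M) (h : Fin d → ℕ)
    (u : ℕ → ℕ) (v : Fin d → ℕ) :
    #(levelTimes d M L (gridSnake M h u) v 0)
      ≤ d * M + #((Ico d (L / M + 1)).filter fun T => ConstraintEvent hd v (d - 1) T u)
        + M * #((Ico d (L / M + 1)).filter fun T => ConstraintEvent hd v d T u) := by
  refine (card_le_sum_card_blocks (filter_subset _ _) hM d).trans ?_
  rw [card_filter, card_filter, mul_sum, add_assoc, ← sum_add_distrib]
  gcongr with T hT
  exact card_block_levelTimes_zero_le hd hM h u v (mem_Ico.mp hT).1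

lemma card_filter_le_mul_of_residue_classes (s : Finset ℕ) (P : ℕ → Prop) [DecidablePred P]
    {n m : ℕ} (hn : 0 < n) (h : ∀ a < n, #((s.filter (· % n = a)).filter P) < m) :
    #(s.filter P) ≤ n * m := by
  have hcover : s.filter P ⊆ (range n).biUnion fun a => (s.filter (· % n = a)).filter P :=
    fun T hT => mem_biUnion.mpr ⟨T % n, mem_range.mpr (Nat.mod_lt T hn),
      mem_filter.mpr ⟨mem_filter.mpr ⟨(mem_filter.mp hT).1, rfl⟩, (mem_filter.mp hT).2⟩⟩
  calc #(s.filter P) ≤ ∑ a ∈ range n, #((s.filter (· % n = a)).filter P) :=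
        (card_le_card hcover).trans card_biUnion_le
    _ ≤ ∑ _a ∈ range n, m := sum_le_sum fun a ha => (h a (mem_range.mp ha)).le
    _ = n * m := by simp

lemma cast_div_add_one_div_pow_le {L M : ℕ} (hM : 0 < M) (r : ℕ) :
    (((L / M + 1) / M ^ r : ℕ) : ℝ) ≤ L / (M : ℝ) ^ (r + 1) + 1 := by
  have hM1 : (1 : ℝ) ≤ M := by exact_mod_cast hM
  have hMr : (1 : ℝ) ≤ (M : ℝ) ^ r := one_le_pow₀ hM1
  calc (((L / M + 1) / M ^ r : ℕ) : ℝ) ≤ ((L / M + 1 : ℕ) : ℝ) / (M : ℝ) ^ r := by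
        exact_mod_cast Nat.cast_div_le
    _ ≤ ((L : ℝ) / M + 1) / (M : ℝ) ^ r := by
        gcongr; push_cast; gcongr; exact Nat.cast_div_le
    _ ≤ L / (M : ℝ) ^ (r + 1) + 1 := by
        rw [add_div, div_div, pow_succ', one_div]
        gcongr
        exact inv_le_one_of_one_le₀ hMr

lemma mul_div_pow_succ_add_one {M : ℕ} (hM : 0 < M) (L : ℝ) (r : ℕ) :
    (M : ℝ) * (L / (M : ℝ) ^ (r + 1) + 1) = L / (M : ℝ) ^ r + M := by
  have hM' : (M : ℝ) ≠ 0 := by exact_mod_cast hM.ne'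
  rw [pow_succ]
  field_simp

lemma one_le_log_of_three_le {M : ℕ} (hM : 3 ≤ M) : 1 ≤ Real.log M := by
  rw [Real.le_log_iff_exp_le (by positivity)]
  linarith [Real.exp_one_lt_d9, show (3 : ℝ) ≤ M by exact_mod_cast hM]

lemma eventThreshold_le {d M n r : ℕ} (hd : 0 < d) (hM : 3 ≤ M) :
    (eventThreshold d M n r : ℝ) ≤ 8 * d * Real.log M + 2 * (n / M ^ r : ℕ) := by
  have hlogM := one_le_log_of_three_le hM
  have hlog2 : (Nat.log 2 M : ℝ) ≤ 2 * Real.log M := by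
    have h : ((2 ^ Nat.log 2 M : ℕ) : ℝ) ≤ M := by
      exact_mod_cast Nat.pow_log_le_self 2 (by omega)
    have := Real.log_le_log (by positivity) h
    rw [Nat.cast_pow, Nat.cast_ofNat, Real.log_pow] at this
    nlinarith [Real.log_two_gt_d9, (Nat.log 2 M).cast_nonneg (α := ℝ)]
  have hd1 : (1 : ℝ) ≤ d := by exact_mod_cast hd
  rw [eventThreshold]
  push_cast
  nlinarith

lemma cast_card_events_le {d M L r : ℕ} (hd : 0 < d) (hM : 3 ≤ M) {v : Fin d → ℕ} {u : ℕ → ℕ}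
    (hcount : #((Ico d (L / M + 1)).filter fun T => ConstraintEvent hd v r T u)
      ≤ (d + 1) * eventThreshold d M (L / M + 1) r) :
    (#((Ico d (L / M + 1)).filter fun T => ConstraintEvent hd v r T u) : ℝ)
      ≤ (d + 1) * (8 * d * Real.log M + 2 * (L / (M : ℝ) ^ (r + 1) + 1)) := by
  have hcount' : (#((Ico d (L / M + 1)).filter fun T => ConstraintEvent hd v r T u) : ℝ)
      ≤ (d + 1) * eventThreshold d M (L / M + 1) r := by exact_mod_cast hcount
  refine hcount'.trans ?_
  gcongr
  exact (eventThreshold_le hd hM).trans (by gcongr; exact cast_div_add_one_div_pow_le (by omega) r)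

lemma cast_card_levelTimes_zero_le {d M L : ℕ} (hd : 0 < d) (hM : 3 ≤ M) (h : Fin d → ℕ)
    (u : ℕ → ℕ) {v : Fin d → ℕ}
    (hgood : ∀ r ≤ d,
      #((Ico d (L / M + 1)).filter fun T => ConstraintEvent hd v r T u)
        ≤ (d + 1) * eventThreshold d M (L / M + 1) r) :
    (#(levelTimes d M L (gridSnake M h u) v 0) : ℝ) ≤ d * M
      + 2 * (d + 1) * (8 * d * Real.log M * M + 2 * (L / (M : ℝ) ^ d) + 2 * M) := by
  have hM0 : 0 < M := by omega
  have hM1 : (1 : ℝ) ≤ M := by exact_mod_cast hM0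
  have hdX : 0 ≤ d * Real.log M := by positivity
  have hcount := card_levelTimes_zero_le (L := L) hd hM0 h u v
  have hE₁ := cast_card_events_le hd hM (hgood (d - 1) (Nat.sub_le d 1))
  have hE₂ := cast_card_events_le hd hM (hgood d le_rfl)
  rw [Nat.sub_add_cancel hd] at hE₁
  calc (#(levelTimes d M L (gridSnake M h u) v 0) : ℝ)
      ≤ d * M + #((Ico d (L / M + 1)).filter fun T => ConstraintEvent hd v (d - 1) T u)
        + M * #((Ico d (L / M + 1)).filter fun T => ConstraintEvent hd v d T u) := by
        exact_mod_cast hcount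
    _ ≤ d * M + (d + 1) * (8 * d * Real.log M + 2 * (L / (M : ℝ) ^ d + 1))
        + M * ((d + 1) * (8 * d * Real.log M + 2 * (L / (M : ℝ) ^ (d + 1) + 1))) := by gcongr
    _ = d * M + (d + 1) * (8 * d * Real.log M + 2 * (L / (M : ℝ) ^ d + 1))
        + (d + 1) * (8 * d * Real.log M * M + 2 * (L / (M : ℝ) ^ d + M)) := by
        rw [← mul_div_pow_succ_add_one hM0]; ring
    _ ≤ _ := by nlinarith [mul_le_mul_of_nonneg_left hM1 hdX]

lemma cast_card_levelTimes_le_of_pos {d M L k : ℕ} (hd : 0 < d) (hM : 3 ≤ M) (h : Fin d → ℕ)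
    (u : ℕ → ℕ) {v : Fin d → ℕ} (hk : 1 ≤ k) (hkd : k ≤ d)
    (hgood : ∀ r ≤ d,
      #((Ico d (L / M + 1)).filter fun T => ConstraintEvent hd v r T u)
        ≤ (d + 1) * eventThreshold d M (L / M + 1) r) :
    (#(levelTimes d M L (gridSnake M h u) v k) : ℝ) ≤ d * M
      + 2 * (d + 1) * (8 * d * Real.log M * M + 2 * (L / (M : ℝ) ^ (d - k)) + 2 * M) := by
  have hM0 : 0 < M := by omega
  have hcount := card_levelTimes_le_of_pos (L := L) hd hM0 h u v hk hkd
  have hE := cast_card_events_le hd hM (hgood (d - k) (Nat.sub_le d k))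
  have hrest : (0 : ℝ)
      ≤ (d + 1) * (8 * d * Real.log M * M + 2 * (L / (M : ℝ) ^ (d - k)) + 2 * M) := by
    positivity
  calc (#(levelTimes d M L (gridSnake M h u) v k) : ℝ)
      ≤ d * M + M * #((Ico d (L / M + 1)).filter fun T => ConstraintEvent hd v (d - k) T u) := by
        exact_mod_cast hcount
    _ ≤ d * M + M * ((d + 1) * (8 * d * Real.log M + 2 * (L / (M : ℝ) ^ (d - k + 1) + 1))) := by
        gcongr
    _ = d * M + (d + 1) * (8 * d * Real.log M * M + 2 * (L / (M : ℝ) ^ (d - k) + M)) := by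
        rw [← mul_div_pow_succ_add_one hM0]; ring
    _ ≤ _ := by linarith

lemma cast_card_levelTimes_le {d M L k : ℕ} (hd : 0 < d) (hM : 3 ≤ M) (h : Fin d → ℕ)
    (u : ℕ → ℕ) {v : Fin d → ℕ} (hk : k ≤ d)
    (hgood : ∀ r ≤ d,
      #((Ico d (L / M + 1)).filter fun T => ConstraintEvent hd v r T u)
        ≤ (d + 1) * eventThreshold d M (L / M + 1) r) :
    (#(levelTimes d M L (gridSnake M h u) v k) : ℝ) ≤ d * M
      + 2 * (d + 1) * (8 * d * Real.log M * M + 2 * (L / (M : ℝ) ^ (d - k)) + 2 * M) := by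
  rcases (show k = 0 ∨ (1 ≤ k ∧ k < d) ∨ d = k by omega) with rfl | ⟨hk1, hkd⟩ | rfl
  · simpa using cast_card_levelTimes_zero_le hd hM h u hgood
  · exact cast_card_levelTimes_le_of_pos hd hM h u hk1 hkd.le hgood
  · have hL : (#(levelTimes d M L (gridSnake M h u) v d) : ℝ) ≤ L := by
      exact_mod_cast (card_filter_le _ _).trans (card_range L).le
    have hrest : (0 : ℝ) ≤ d * M + 2 * (d + 1) * (8 * d * Real.log M * M + 2 * M) + 4 * d * L := by
      positivity
    rw [Nat.sub_self, pow_zero, div_one]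
    linarith

lemma isGridSparse_of_card_events_le {d M L : ℕ} (hd : 0 < d) (hM : 3 ≤ M) (h : Fin d → ℕ)
    (u : ℕ → ℕ)
    (hgood : ∀ v : Fin d → ℕ, (∀ i, v i < M) → ∀ r ≤ d,
      #((Ico d (L / M + 1)).filter fun T => ConstraintEvent hd v r T u)
        ≤ (d + 1) * eventThreshold d M (L / M + 1) r) :
    IsGridSparse (100 * (d + 1)) d M L (gridSnake M h u) := by
  intro v hv k hk
  have hS := cast_card_levelTimes_le hd hM h u hk (hgood v hv)
  have hX := one_le_log_of_three_le hM
  have hd1 : (1 : ℝ) ≤ d := by exact_mod_cast hd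
  have hdX : 1 ≤ d * Real.log M := by nlinarith
  set Q := (L : ℝ) / (M : ℝ) ^ (d - k)
  have hQ : 0 ≤ Q := by positivity
  have hM0 : (0 : ℝ) ≤ M := Nat.cast_nonneg M
  change (#(levelTimes d M L (gridSnake M h u) v k) : ℝ) ≤ _
  rw [Real.log_pow]
  calc _ ≤ _ := hS
    _ ≤ (d + 1) * (d * Real.log M) * (21 * M + 4 * Q) := by
        nlinarith [mul_nonneg (sub_nonneg.mpr hdX) (by positivity : (0 : ℝ) ≤ (d + 1) * Q),
          mul_nonneg (sub_nonneg.mpr hdX) (by positivity : (0 : ℝ) ≤ (d + 1) * M)]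
    _ ≤ 100 * (d + 1) * (d * Real.log M) * (M + Q) := by
        nlinarith [mul_nonneg (by positivity : (0 : ℝ) ≤ (d + 1) * (d * Real.log M)) hM0,
          mul_nonneg (by positivity : (0 : ℝ) ≤ (d + 1) * (d * Real.log M)) hQ]

lemma card_filter_forall_extValsN_le {ι : Type*} {L M r : ℕ} (hM : 0 < M) (A : Finset ι)
    (C : ι → Finset ℕ) (g : ℕ → ℕ) (hCL : ∀ i ∈ A, ∀ s ∈ C i, s < L)
    (hCr : ∀ i ∈ A, r ≤ #(C i)) (hdisj : (A : Set ι).PairwiseDisjoint C) :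
    (#{ω : Fin L → Fin M | ∀ i ∈ A, ∀ s ∈ C i, extValsN ω s = g s} : ℝ)
      ≤ M ^ L * ((M : ℝ) ^ r)⁻¹ ^ #A := by
  classical
  have hfilter : ({ω | ∀ i ∈ A, ∀ s ∈ C i, extValsN ω s = g s} : Finset (Fin L → Fin M))
      = ({ω | ∀ s ∈ A.biUnion C, extValsN ω s = g s} : Finset (Fin L → Fin M)) := by
    ext ω
    simp only [mem_filter, mem_univ, true_and, mem_biUnion]
    exact ⟨fun h s ⟨i, hi, hs⟩ => h i hi s hs, fun h i hi s hs => h s ⟨i, hi, hs⟩⟩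
  have hcard : r * #A ≤ #(A.biUnion C) := by
    rw [card_biUnion hdisj, mul_comm, ← smul_eq_mul]
    exact card_nsmul_le_sum _ _ _ hCr
  have hnat := card_filter_extValsN_mul_pow_le (M := M) (A.biUnion C)
    (fun s hs => by obtain ⟨i, hi, hs⟩ := mem_biUnion.mp hs; exact hCL i hi s hs) g
  rw [← hfilter] at hnat
  have hreal : (#{ω : Fin L → Fin M | ∀ i ∈ A, ∀ s ∈ C i, extValsN ω s = g s} : ℝ)
      * (M : ℝ) ^ (r * #A) ≤ (M : ℝ) ^ L := by
    exact_mod_cast (Nat.mul_le_mul_left _ (Nat.pow_le_pow_right hM hcard)).trans hnat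
  rwa [inv_pow, ← pow_mul, ← div_eq_mul_inv, le_div_iff₀ (by positivity)]

lemma card_many_constraintEvents_le {d M L r : ℕ} (hd : 0 < d) (hM : 2 ≤ M) (v : Fin d → ℕ)
    (hr : r ≤ d) (a : ℕ) :
    (#{ω : Fin L → Fin M | eventThreshold d M (L / M + 1) r ≤
        #(((Ico d (L / M + 1)).filter (· % (d + 1) = a)).filter
          fun T => ConstraintEvent hd v r T (extValsN ω))} : ℝ)
      ≤ M ^ L / (M : ℝ) ^ (2 * d) := by
  set blocks := (Ico d (L / M + 1)).filter (· % (d + 1) = a)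
  have hblock : ∀ T ∈ blocks, d ≤ T ∧ T < L / M + 1 ∧ T % (d + 1) = a := fun T hT => by
    simpa [blocks, and_assoc] using hT
  have hcard : #blocks ≤ L / M + 1 := (card_filter_le _ _).trans (by simp)
  have hE : ∀ A ⊆ blocks,
      (#{ω : Fin L → Fin M | ∀ T ∈ A, ConstraintEvent hd v r T (extValsN ω)} : ℝ)
        ≤ Fintype.card (Fin L → Fin M) * ((M : ℝ) ^ r)⁻¹ ^ #A := by
    intro A hA
    have hbd : ∀ T ∈ A, d ≤ T ∧ T < L / M + 1 ∧ T % (d + 1) = a := fun T hT => hblock T (hA hT)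
    simp only [Fintype.card_fun, Fintype.card_fin, Nat.cast_pow]
    refine card_filter_forall_extValsN_le (by omega) A (constraintSet d · r) _ ?_ ?_ ?_
    · intro T hT s hs
      obtain ⟨hdT, hTL, -⟩ := hbd T hT
      have hL : L / M < L := Nat.div_lt_self (Nat.pos_of_div_pos (b := M) (by omega)) (by omega)
      have := (mem_constraintSet_bounds hd (by omega) hs).2
      omega
    · exact fun T hT => le_card_constraintSet hd (hbd T hT).1 hr
    · intro T hT T' hT' hne
      obtain ⟨hdT, -, haT⟩ := hbd T hT
      obtain ⟨hdT', -, haT'⟩ := hbd T' hT'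
      exact disjoint_constraintSet hd (by omega) (by omega) (haT.trans haT'.symm) hne
  simpa using card_many_events_le blocks
    (fun T (ω : Fin L → Fin M) => ConstraintEvent hd v r T (extValsN ω)) hM hcard hE

lemma unifPr_eq_one_sub {Ω : Type*} [Fintype Ω] [Nonempty Ω] (P : Ω → Prop) [DecidablePred P] :
    unifPr P = 1 - (#{ω | ¬ P ω} : ℝ) / Fintype.card Ω := by
  have hsplit := card_filter_add_card_filter_not (s := (univ : Finset Ω)) (p := P)
  rw [card_univ] at hsplit
  have hΩ : (0 : ℝ) < Fintype.card Ω := by exact_mod_cast Fintype.card_pos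
  rw [unifPr, Nat.card_eq_fintype_card, Fintype.card_subtype, eq_sub_iff_add_eq, ← add_div,
    div_eq_one_iff_eq hΩ.ne']
  exact_mod_cast hsplit

open scoped Classical in
lemma card_not_isGridSparse_le {d M L : ℕ} (hd : 0 < d) (hM : 3 ≤ M) (h : Fin d → ℕ) :
    (#{ω : Fin L → Fin M | ¬ IsGridSparse (100 * (d + 1)) d M L (gridSnake M h (extValsN ω))} : ℝ)
      ≤ (d + 1) ^ 2 * M ^ L / (M : ℝ) ^ d := by
  set bad : (Fin d → ℕ) → ℕ → ℕ → Finset (Fin L → Fin M) := fun v r a =>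
    {ω | eventThreshold d M (L / M + 1) r ≤ #(((Ico d (L / M + 1)).filter (· % (d + 1) = a)).filter
      fun T => ConstraintEvent hd v r T (extValsN ω))}
  set grid := Fintype.piFinset fun _ : Fin d => range M
  have hcover : ({ω | ¬ IsGridSparse (100 * (d + 1)) d M L (gridSnake M h (extValsN ω))} :
      Finset (Fin L → Fin M))
      ⊆ grid.biUnion fun v =>
          (range (d + 1)).biUnion fun r => (range (d + 1)).biUnion (bad v r) := by
    intro ω hω
    by_contra hgood
    refine (mem_filter.mp hω).2 (isGridSparse_of_card_events_le hd hM h _ fun v hv r hr => ?_)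
    refine card_filter_le_mul_of_residue_classes _ _ d.succ_pos fun a ha => not_le.mp fun hbad => ?_
    refine hgood (mem_biUnion.mpr ⟨v, ?_, mem_biUnion.mpr ⟨r, ?_, mem_biUnion.mpr ⟨a, ?_, ?_⟩⟩⟩)
    · exact Fintype.mem_piFinset.mpr fun i => mem_range.mpr (hv i)
    · exact mem_range.mpr (Nat.lt_succ_of_le hr)
    · exact mem_range.mpr ha
    · exact mem_filter.mpr ⟨mem_univ ω, hbad⟩
  have hM0 : (0 : ℝ) < M := by exact_mod_cast (by omega : 0 < M)
  calc (#{ω : Fin L → Fin M | ¬ IsGridSparse (100 * (d + 1)) d M L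
          (gridSnake M h (extValsN ω))} : ℝ)
      ≤ ∑ v ∈ grid, ∑ r ∈ range (d + 1), ∑ a ∈ range (d + 1), (#(bad v r a) : ℝ) := by
        exact_mod_cast (card_le_card hcover).trans <| card_biUnion_le.trans <| sum_le_sum
          fun v _ => card_biUnion_le.trans <| sum_le_sum fun r _ => card_biUnion_le
    _ ≤ ∑ v ∈ grid, ∑ r ∈ range (d + 1), ∑ a ∈ range (d + 1), (M : ℝ) ^ L / (M : ℝ) ^ (2 * d) := by
        gcongr with v _ r hr a _
        exact card_many_constraintEvents_le hd (by omega) v (Nat.lt_succ_iff.mp (mem_range.mp hr)) a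
    _ = (d + 1) ^ 2 * M ^ L / (M : ℝ) ^ d := by
        simp only [sum_const, card_range, grid, Fintype.card_piFinset, prod_const, card_univ,
          Fintype.card_fin, nsmul_eq_mul]
        rw [two_mul, pow_add]
        field_simp
        push_cast
        ring

/-- **Almost all grid snakes are sparse.** Fix `d ≥ 3`. There is a constant `c > 0`
(depending only on `d`) such that, as `N = M^d → ∞`, with `L = ⌊√N/100⌋`, for every
start vertex `h`, a snake drawn from the grid snake distribution `D_{h,L}` on
`{0,…,M-1}^d` is `c`-sparse with probability `1 - o(1)`. -/
theorem stmt_13 (d : ℕ) (hd : 3 ≤ d) :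
    ∃ c > (0 : ℝ), ∀ ε > (0 : ℝ), ∃ M₀ : ℕ, ∀ M : ℕ, M₀ ≤ M →
      ∀ h : Fin d → ℕ, (∀ i, h i < M) →
        ∀ L : ℕ, L = ⌊Real.sqrt ((M : ℝ) ^ d) / 100⌋₊ →
          1 - ε ≤ unifPr (fun ω : Fin L → Fin M =>
            IsGridSparse c d M L (gridSnake M h (extValsN ω))) := by
  classical
  refine ⟨100 * (d + 1), by positivity, fun ε hε => ⟨max 3 ⌈((d : ℝ) + 1) ^ 2 / ε⌉₊, ?_⟩⟩
  intro M hM h _ L _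
  have hM3 : 3 ≤ M := le_of_max_le_left hM
  have : Nonempty (Fin M) := ⟨⟨0, by omega⟩⟩
  have hMε : ((d : ℝ) + 1) ^ 2 / ε ≤ M := Nat.ceil_le.mp (le_of_max_le_right hM)
  have hMd : (M : ℝ) ≤ (M : ℝ) ^ d :=
    le_self_pow₀ (by exact_mod_cast (by omega : 1 ≤ M)) (by omega)
  have hbad := card_not_isGridSparse_le (L := L) (by omega) hM3 h
  rw [unifPr_eq_one_sub, sub_le_sub_iff_left, Fintype.card_fun, Fintype.card_fin,
    Fintype.card_fin, Nat.cast_pow, div_le_iff₀ (by positivity)]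
  calc _ ≤ (d + 1) ^ 2 * M ^ L / (M : ℝ) ^ d := hbad
    _ ≤ ε * M ^ L := by
        rw [div_le_iff₀ (by positivity), mul_right_comm]
        gcongr
        rw [div_le_iff₀ hε] at hMε
        linarith [mul_le_mul_of_nonneg_left hMd hε.le]
end

section
/- Fix an integer d ≥ 3. For every c > 0 there exists c' > 0 (depending only on c and d) such that the following holds for all sufficiently large d-th powers N, with M = N^{1/d} and L = ⌊√N/100⌋. Let X = (x_0,…,x_{L−1}) be a sequence in the support of the grid snake distribution D_{h,L} on {1,…,M}^d that is c-sparse. Draw j uniformly from {0,…,L−1} and let Y be obtained from X by flicking the tail at j. Then for every vertex v, Pr_{j,Y}[v ∈ Y[j]] ≤ c'·(N^{1/d}·log N)/L. -/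
/-- One unit step from `a` toward `u`, stalling at `u`. -/
def stepToward (a u : ℕ) : ℕ :=
  if a < u then a + 1 else if u < a then a - 1 else a

/-- Regrow a grid snake tail backwards from `start` (the vertex at time `j`): after
`k` backward steps we are at time `j - k`; the backward move producing the vertex at
time `t` moves coordinate `⌊t/M⌋ mod d` one unit toward the fresh target `w ⌊t/M⌋`,
stalling once it is reached. -/
def gridFlickAux {d : ℕ} (M : ℕ) (start : Fin d → ℕ) (j : ℕ) (w : ℕ → ℕ) :
    ℕ → (Fin d → ℕ)
  | 0 => start
  | k + 1 => fun i =>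
      if (i : ℕ) = ((j - (k + 1)) / M) % d then
        stepToward (gridFlickAux M start j w k i) (w ((j - (k + 1)) / M))
      else gridFlickAux M start j w k i

/-- The grid snake obtained from `x` by flicking the tail at `j` with fresh targets
`w` (one per macro-block): `y t = x t` for `t ≥ j`, and for `t < j` the tail is
regrown backwards from `x j`. -/
def gridFlick {d : ℕ} (M : ℕ) (x : ℕ → Fin d → ℕ) (j : ℕ) (w : ℕ → ℕ) (t : ℕ) :
    Fin d → ℕ :=
  if j ≤ t then x t else gridFlickAux M (x j) j w (j - t)

open Finset Fin.NatCast

theorem approachN_zero (a u : ℕ) : approachN a u 0 = a := by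
  unfold approachN; split <;> omega

theorem approachN_of_le {a u s : ℕ} (h : a ≤ u + s) (h' : u ≤ a + s) : approachN a u s = u := by
  unfold approachN; split <;> omega

theorem stepToward_approachN (a u s : ℕ) :
    stepToward (approachN a u s) u = approachN a u (s + 1) := by
  unfold approachN stepToward; split_ifs <;> omega

theorem stepToward_lt {M a u : ℕ} (ha : a < M) (hu : u < M) : stepToward a u < M := by
  unfold stepToward; split_ifs <;> omega

theorem gridSnake_lt {d M : ℕ} {h : Fin d → ℕ} {u : ℕ → ℕ} (hh : ∀ i, h i < M)
    (hu : ∀ T, u T < M) (t : ℕ) (i : Fin d) : gridSnake M h u t i < M := by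
  have hchain : ∀ T i, macroChainN h u T i < M := by
    intro T
    induction T with
    | zero => exact hh
    | succ T ih => intro i; simp only [macroChainN]; split <;> simp [hu, ih]
  unfold gridSnake approachN
  split_ifs <;> have := hchain (t / M) i <;> have := hu (t / M) <;> omega

theorem Nat.mod_ne_mod_of_lt_of_lt_add {a b d : ℕ} (hab : a < b) (hbd : b < a + d) :
    a % d ≠ b % d := fun h =>
  absurd (Nat.le_of_dvd (by omega) ((Nat.modEq_iff_dvd' hab.le).mp h)) (by omega)

theorem Nat.mod_add_sub_mod {b n d : ℕ} (hb : b ≤ n) (hnb : n - b ≤ d) :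
    (n % d + d - (n - b)) % d = b % d := by
  have hq : n % d + d - (n - b) + n / d * d = b + d := by
    have := Nat.div_add_mod n d
    rw [mul_comm] at this
    omega
  rw [← Nat.add_mul_mod_self_right, hq, Nat.add_mod_right]

section BackwardWalk

variable {d M : ℕ} {a : Fin d → ℕ} {j : ℕ} {w : ℕ → ℕ}

theorem gridFlickAux_lt (ha : ∀ i, a i < M) (hw : ∀ T, w T < M) (k : ℕ) (i : Fin d) :
    gridFlickAux M a j w k i < M := by
  induction k generalizing i with
  | zero => exact ha i
  | succ k ih =>
    simp only [gridFlickAux]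
    split
    · exact stepToward_lt (ih i) (hw _)
    · exact ih i

theorem gridFlickAux_add (k m : ℕ) :
    gridFlickAux M a j w (k + m) = gridFlickAux M (gridFlickAux M a j w k) (j - k) w m := by
  induction m with
  | zero => rfl
  | succ m ih =>
    funext i
    show gridFlickAux M a j w (k + m + 1) i = _
    simp only [gridFlickAux, ih, Nat.sub_sub, Nat.add_assoc]

theorem gridFlickAux_apply_of_forall_ne {k : ℕ} {i : Fin d} (hk : k ≤ j)
    (h : ∀ t, j - k ≤ t → t < j → t / M % d ≠ i) : gridFlickAux M a j w k i = a i := by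
  induction k with
  | zero => rfl
  | succ k ih =>
    simp only [gridFlickAux]
    rw [if_neg fun hc => h _ le_rfl (by omega) hc.symm,
      ih (by omega) fun t h1 h2 => h t (by omega) h2]

theorem gridFlickAux_apply_of_forall_div_eq {k B : ℕ} {i : Fin d} (hk : k ≤ j)
    (hi : (i : ℕ) = B % d) (h : ∀ t, j - k ≤ t → t < j → t / M = B) :
    gridFlickAux M a j w k i = approachN (a i) (w B) k := by
  induction k with
  | zero => exact (approachN_zero _ _).symm
  | succ k ih =>
    have hB : (j - (k + 1)) / M = B := h _ le_rfl (by omega)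
    simp only [gridFlickAux]
    rw [if_pos (by rw [hB, hi]), hB, ih (by omega) fun t h1 h2 => h t (by omega) h2,
      stepToward_approachN]

theorem gridFlickAux_apply_of_block_traversed {k B : ℕ} {i : Fin d}
    (ha : ∀ i, a i < M) (hw : ∀ T, w T < M) (hk : k ≤ j) (hi : (i : ℕ) = B % d)
    (hkB : j - k ≤ B * M) (hBj : (B + 1) * M ≤ j)
    (h : ∀ t, j - k ≤ t → t < B * M → t / M % d ≠ i) :
    gridFlickAux M a j w k i = w B := by
  have hsplit : (j - (B + 1) * M) + M + (B * M - (j - k)) = k := by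
    rw [Nat.succ_mul] at hBj ⊢; omega
  have hj₁ : j - (j - (B + 1) * M) = (B + 1) * M := by omega
  have hj₂ : j - (j - (B + 1) * M + M) = B * M := by rw [Nat.succ_mul] at hBj ⊢; omega
  rw [← hsplit, gridFlickAux_add, gridFlickAux_add, hj₁, hj₂,
    gridFlickAux_apply_of_forall_ne (by omega) fun t h1 h2 => h t (by omega) h2,
    gridFlickAux_apply_of_forall_div_eq (k := M) (by rw [Nat.succ_mul]; omega) hi fun t h1 h2 =>
      Nat.div_eq_of_lt_le (by rw [Nat.succ_mul] at h1; omega) h2]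
  -- `M` unit steps reach `w B` from any point of `{0, …, M-1}`.
  exact approachN_of_le (by have := gridFlickAux_lt (j := j) ha hw (j - (B + 1) * M) i; omega)
    (by have := hw B; omega)

end BackwardWalk

section Hits

variable {d M : ℕ} {a v : Fin d → ℕ} {j t : ℕ} {w : ℕ → ℕ}

theorem gridFlick_of_le {x : ℕ → Fin d → ℕ} (ht : t ≤ j) :
    gridFlick M x j w t = gridFlickAux M (x j) j w (j - t) := by
  unfold gridFlick
  split
  · obtain rfl : t = j := by omega
    simp [gridFlickAux]
  · rfl

theorem eq_of_gridFlickAux_eq [NeZero d] (hit : gridFlickAux M a j w (j - t) = v) (ht : t ≤ j)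
    (ha : ∀ i, a i < M) (hw : ∀ T, w T < M) {B : ℕ} (htB : t / M < B) (hBj : B < j / M)
    (hBd : B < t / M + d) : w B = v B := by
  have hM : 0 < M := Nat.pos_of_ne_zero (by rintro rfl; simp at hBj)
  rw [← hit]
  refine (gridFlickAux_apply_of_block_traversed ha hw (Nat.sub_le j t) (Fin.val_natCast B d)
    ?_ ((Nat.le_div_iff_mul_le hM).1 hBj) fun t' h1 h2 => ?_).symm
  · rw [Nat.sub_sub_self ht]; exact ((Nat.div_lt_iff_lt_mul hM).1 htB).le
  · rw [Nat.sub_sub_self ht] at h1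
    have hb₁ : t / M ≤ t' / M := Nat.div_le_div_right h1
    have hb₂ : t' / M < B := (Nat.div_lt_iff_lt_mul hM).2 h2
    rw [Fin.val_natCast]
    exact Nat.mod_ne_mod_of_lt_of_lt_add hb₂ (by omega)

theorem delta_le_of_gridFlickAux_eq (hit : gridFlickAux M a j w (j - t) = v) (ht : t ≤ j)
    (htj : j / M < t / M + d) : delta d a v (j / M % d) ≤ j / M - t / M + 1 := by
  refine Nat.sInf_le fun i hi => ?_
  rw [← hit, gridFlickAux_apply_of_forall_ne (Nat.sub_le j t)]
  intro t' h1 h2 hc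
  rw [Nat.sub_sub_self ht] at h1
  have hb₁ : t / M ≤ t' / M := Nat.div_le_div_right h1
  have hb₂ : t' / M ≤ j / M := Nat.div_le_div_right h2.le
  exact hi (j / M - t' / M) (by omega) ((Nat.mod_add_sub_mod hb₂ (by omega)).trans hc).symm

theorem flick_hit_cases [NeZero d] {x : ℕ → Fin d → ℕ} (hxj : ∀ i, x j i < M)
    (hw : ∀ T, w T < M) (hit : ∃ t ≤ j, gridFlick M x j w t = v) :
    (∃ B, B + d ≤ j / M ∧ ∀ T ∈ Ioo B (B + d), w T = v T) ∨
      ∃ r < d, r ≤ j / M ∧ delta d (x j) v (j / M % d) ≤ r + 1 ∧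
        ∀ T ∈ Ioo (j / M - r) (j / M), w T = v T := by
  obtain ⟨t, ht, hit⟩ := hit
  rw [gridFlick_of_le ht] at hit
  have htj : t / M ≤ j / M := Nat.div_le_div_right ht
  by_cases hdeep : t / M + d ≤ j / M
  · refine .inl ⟨t / M, hdeep, fun T hT => ?_⟩
    rw [mem_Ioo] at hT
    exact eq_of_gridFlickAux_eq hit ht hxj hw hT.1 (by omega) hT.2
  · refine .inr ⟨j / M - t / M, by omega, Nat.sub_le _ _,
      delta_le_of_gridFlickAux_eq hit ht (by omega), fun T hT => ?_⟩
    rw [mem_Ioo] at hT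
    exact eq_of_gridFlickAux_eq hit ht hxj hw (by omega) hT.2 (by omega)

end Hits

theorem extValsN_lt {L M : ℕ} (hM : 0 < M) (ω : Fin L → Fin M) (T : ℕ) : extValsN ω T < M := by
  unfold extValsN
  split
  exacts [(ω _).isLt, hM]

theorem card_filter_forall_val_eq_mul_pow_le {ι : Type*} [Fintype ι] [DecidableEq ι] (M : ℕ)
    (S : Finset ι) (g : ι → ℕ) :
    #{ω : ι → Fin M | ∀ i ∈ S, (ω i : ℕ) = g i} * M ^ #S ≤ M ^ Fintype.card ι := by
  have hpi : univ.filter (fun ω : ι → Fin M => ∀ i ∈ S, (ω i : ℕ) = g i) =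
      Fintype.piFinset fun i => if i ∈ S then univ.filter (fun a : Fin M => (a : ℕ) = g i)
        else univ := by
    ext ω
    simp only [mem_filter, mem_univ, true_and, Fintype.mem_piFinset]
    refine forall_congr' fun i => ?_
    split_ifs with hi <;> simp [hi]
  have hfactor : ∀ i, #(if i ∈ S then univ.filter (fun a : Fin M => (a : ℕ) = g i) else univ) ≤
      if i ∈ Sᶜ then M else 1 := by
    intro i
    by_cases hi : i ∈ S
    · simp only [hi, if_true, mem_compl, not_true_eq_false, if_false]
      exact card_le_one.2 fun a ha b hb =>
        Fin.ext ((mem_filter.1 ha).2.trans (mem_filter.1 hb).2.symm)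
    · simp [hi]
  calc #{ω : ι → Fin M | ∀ i ∈ S, (ω i : ℕ) = g i} * M ^ #S
      ≤ (∏ i, if i ∈ Sᶜ then M else 1) * M ^ #S := by
        rw [hpi, Fintype.card_piFinset]
        gcongr with i
        exact hfactor i
    _ = M ^ Fintype.card ι := by
        rw [prod_ite_mem, univ_inter, prod_const, ← pow_add, card_compl_add_card]

theorem card_forall_extValsN_eq_le {L M : ℕ} (hM : 0 < M) (S : Finset ℕ) (hS : ∀ T ∈ S, T < L)
    (g : ℕ → ℕ) :
    (#{ω : Fin L → Fin M | ∀ T ∈ S, extValsN ω T = g T} : ℝ) ≤ (M : ℝ) ^ L / (M : ℝ) ^ #S := by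
  have h := card_filter_forall_val_eq_mul_pow_le M (S.attachFin hS) (fun i => g i)
  rw [card_attachFin, Fintype.card_fin] at h
  have hset : #{ω : Fin L → Fin M | ∀ T ∈ S, extValsN ω T = g T} =
      #{ω : Fin L → Fin M | ∀ i ∈ S.attachFin hS, (ω i : ℕ) = g i} := by
    refine congrArg card (filter_congr fun ω _ => ⟨fun hω i hi => ?_, fun hω T hT => ?_⟩)
    · have := hω i (mem_attachFin hS |>.1 hi)
      rwa [extValsN, dif_pos i.isLt] at this
    · rw [extValsN, dif_pos (hS T hT)]
      exact hω ⟨T, hS T hT⟩ (mem_attachFin hS |>.2 hT)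
  rw [hset, le_div_iff₀ (by positivity)]
  norm_cast
  convert h

theorem card_flick_hit_le {d M L j : ℕ} [NeZero d] {x : ℕ → Fin d → ℕ} {v : Fin d → ℕ}
    (hM : 0 < M) (hj : j < L) (hxj : ∀ i, x j i < M) :
    (#{ω : Fin L → Fin M | ∃ t ≤ j, gridFlick M x j (extValsN ω) t = v} : ℝ) ≤
      L * ((M : ℝ) ^ L / (M : ℝ) ^ (d - 1)) + ∑ r ∈ range d,
        if delta d (x j) v (j / M % d) ≤ r + 1 then (M : ℝ) ^ L / (M : ℝ) ^ (r - 1) else 0 := by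
  set pinned : Finset ℕ → Finset (Fin L → Fin M) :=
    fun S => {ω | ∀ T ∈ S, extValsN ω T = v T} with hpinned
  have hpinned_le : ∀ S : Finset ℕ, (∀ T ∈ S, T < L) →
      (#(pinned S) : ℝ) ≤ (M : ℝ) ^ L / (M : ℝ) ^ #S :=
    fun S hS => card_forall_extValsN_eq_le hM S hS _
  have hjM : j / M ≤ j := Nat.div_le_self j M
  set deep := {B ∈ range L | B + d ≤ j / M}
  set shallow := {r ∈ range d | r ≤ j / M ∧ delta d (x j) v (j / M % d) ≤ r + 1}
  have hcover : univ.filter (fun ω : Fin L → Fin M => ∃ t ≤ j, gridFlick M x j (extValsN ω) t = v) ⊆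
      deep.biUnion (fun B => pinned (Ioo B (B + d))) ∪
        shallow.biUnion (fun r => pinned (Ioo (j / M - r) (j / M))) := by
    intro ω hω
    simp only [mem_filter, mem_univ, true_and] at hω
    rcases flick_hit_cases hxj (extValsN_lt hM ω) hω with ⟨B, hB, hpin⟩ | ⟨r, hr, hrj, hδ, hpin⟩
    · refine mem_union_left _ (mem_biUnion.2 ⟨B, ?_, ?_⟩)
      · simp only [deep, mem_filter, mem_range]; omega
      · simpa [hpinned] using hpin
    · refine mem_union_right _ (mem_biUnion.2 ⟨r, ?_, ?_⟩)
      · simp only [shallow, mem_filter, mem_range]; exact ⟨hr, hrj, hδ⟩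
      · simpa [hpinned] using hpin
  have hcard := (card_le_card hcover).trans
    ((card_union_le _ _).trans (add_le_add card_biUnion_le card_biUnion_le))
  calc (#{ω : Fin L → Fin M | ∃ t ≤ j, gridFlick M x j (extValsN ω) t = v} : ℝ)
      ≤ ∑ B ∈ deep, (#(pinned (Ioo B (B + d))) : ℝ) +
          ∑ r ∈ shallow, (#(pinned (Ioo (j / M - r) (j / M))) : ℝ) := by exact_mod_cast hcard
    _ ≤ ∑ _B ∈ deep, (M : ℝ) ^ L / (M : ℝ) ^ (d - 1) +
          ∑ r ∈ shallow, (M : ℝ) ^ L / (M : ℝ) ^ (r - 1) := by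
        gcongr with B hB r hr
        · simp only [deep, mem_filter, mem_range] at hB
          refine (hpinned_le _ fun T hT => ?_).trans_eq ?_
          · rw [mem_Ioo] at hT; omega
          · rw [Nat.card_Ioo, show B + d - B - 1 = d - 1 by omega]
        · simp only [shallow, mem_filter, mem_range] at hr
          refine (hpinned_le _ fun T hT => ?_).trans_eq ?_
          · rw [mem_Ioo] at hT; omega
          · rw [Nat.card_Ioo, show j / M - (j / M - r) - 1 = r - 1 by omega]
    _ ≤ L * ((M : ℝ) ^ L / (M : ℝ) ^ (d - 1)) + ∑ r ∈ range d,
          if delta d (x j) v (j / M % d) ≤ r + 1 then (M : ℝ) ^ L / (M : ℝ) ^ (r - 1) else 0 := by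
        rw [sum_const, nsmul_eq_mul, ← sum_filter]
        gcongr
        · exact_mod_cast (card_filter_le _ _).trans (card_range L).le
        · intro r hr
          simp only [shallow, mem_filter] at hr ⊢
          exact ⟨hr.1, hr.2.2⟩

theorem unifPr_flick_hit_le {d M L : ℕ} [NeZero d] {x : ℕ → Fin d → ℕ} {v : Fin d → ℕ}
    (hM : 0 < M) (hL : 0 < L) (hx : ∀ j < L, ∀ i, x j i < M) :
    unifPr (fun σ : Fin L × (Fin L → Fin M) =>
        ∃ t ≤ (σ.1 : ℕ), gridFlick M x (σ.1 : ℕ) (extValsN σ.2) t = v) ≤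
      L / (M : ℝ) ^ (d - 1) + ∑ r ∈ range d,
        (#{j ∈ range L | delta d (x j) v (j / M % d) ≤ r + 1} : ℝ) / ((M : ℝ) ^ (r - 1) * L) := by
  have hcount : (Nat.card {σ : Fin L × (Fin L → Fin M) //
      ∃ t ≤ (σ.1 : ℕ), gridFlick M x (σ.1 : ℕ) (extValsN σ.2) t = v} : ℝ) =
      ∑ j ∈ range L, (#{ω : Fin L → Fin M | ∃ t ≤ j, gridFlick M x j (extValsN ω) t = v} : ℝ) := by
    rw [Nat.card_eq_fintype_card, Fintype.card_subtype, card_filter, Fintype.sum_prod_type,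
      ← Fin.sum_univ_eq_sum_range]
    push_cast
    simp only [card_filter, Nat.cast_sum, Nat.cast_ite, Nat.cast_one, Nat.cast_zero]
  unfold unifPr
  rw [hcount, Fintype.card_prod, Fintype.card_fun, Fintype.card_fin, Fintype.card_fin,
    div_le_iff₀ (by positivity)]
  calc ∑ j ∈ range L, (#{ω : Fin L → Fin M | ∃ t ≤ j, gridFlick M x j (extValsN ω) t = v} : ℝ)
      ≤ ∑ j ∈ range L, (L * ((M : ℝ) ^ L / (M : ℝ) ^ (d - 1)) + ∑ r ∈ range d,
          if delta d (x j) v (j / M % d) ≤ r + 1 then (M : ℝ) ^ L / (M : ℝ) ^ (r - 1) else 0) :=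
        sum_le_sum fun j hj => card_flick_hit_le hM (mem_range.1 hj) (hx j (mem_range.1 hj))
    _ = _ := by
        rw [sum_add_distrib, sum_const, card_range, sum_comm]
        simp only [sum_ite, sum_const_zero, add_zero, sum_const, nsmul_eq_mul]
        push_cast
        rw [add_mul, sum_mul]
        congr 1
        · field_simp
        · refine sum_congr rfl fun r _ => ?_
          field_simp

theorem card_delta_le_of_isGridSparse {c : ℝ} {d M L : ℕ} {x : ℕ → Fin d → ℕ}
    (hsp : IsGridSparse c d M L x) {v : Fin d → ℕ} (hv : ∀ i, v i < M) (hc : 0 ≤ c)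
    (hM : 0 < M) {m : ℕ} (hm : m ≤ d) :
    (#{j ∈ range L | delta d (x j) v (j / M % d) ≤ m} : ℝ) ≤
      (m + 1) * (c * Real.log ((M : ℝ) ^ d) * (M + L / (M : ℝ) ^ (d - m))) := by
  have hM₁ : (1 : ℝ) ≤ M := by exact_mod_cast hM
  have hlog : 0 ≤ Real.log ((M : ℝ) ^ d) := Real.log_nonneg (one_le_pow₀ hM₁)
  rw [card_eq_sum_card_fiberwise (f := fun j => delta d (x j) v (j / M % d)) (t := range (m + 1))
    fun j hj => mem_range.2 (Nat.lt_succ_of_le (mem_filter.1 hj).2)]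
  push_cast
  calc ∑ k ∈ range (m + 1), (#{j ∈ {j ∈ range L | delta d (x j) v (j / M % d) ≤ m} |
        delta d (x j) v (j / M % d) = k} : ℝ)
      ≤ ∑ _k ∈ range (m + 1), c * Real.log ((M : ℝ) ^ d) * (M + L / (M : ℝ) ^ (d - m)) := by
        refine sum_le_sum fun k hk => ?_
        have hkm : k ≤ m := Nat.le_of_lt_succ (mem_range.1 hk)
        have hsub : {j ∈ {j ∈ range L | delta d (x j) v (j / M % d) ≤ m} |
            delta d (x j) v (j / M % d) = k} ⊆ {j ∈ range L | delta d (x j) v (j / M % d) = k} :=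
          fun j hj => by simp only [mem_filter] at hj ⊢; exact ⟨hj.1.1, hj.2⟩
        calc _ ≤ (#{j ∈ range L | delta d (x j) v (j / M % d) = k} : ℝ) := by
              exact_mod_cast card_le_card hsub
          _ ≤ c * Real.log ((M : ℝ) ^ d) * (M + L / (M : ℝ) ^ (d - k)) := hsp v hv k (hkm.trans hm)
          _ ≤ c * Real.log ((M : ℝ) ^ d) * (M + L / (M : ℝ) ^ (d - m)) := by gcongr
    _ = (m + 1) * (c * Real.log ((M : ℝ) ^ d) * (M + L / (M : ℝ) ^ (d - m))) := by
        rw [sum_const, card_range, nsmul_eq_mul]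
        push_cast
        ring

theorem card_delta_div_le_of_isGridSparse {c : ℝ} {d M L : ℕ} {x : ℕ → Fin d → ℕ}
    (hsp : IsGridSparse c d M L x) {v : Fin d → ℕ} (hv : ∀ i, v i < M) (hc : 0 ≤ c)
    (hM : 0 < M) (hL : 0 < L) (hLM : L ≤ M ^ (d - 1)) {r : ℕ} (hr : r < d) :
    (#{j ∈ range L | delta d (x j) v (j / M % d) ≤ r + 1} : ℝ) / ((M : ℝ) ^ (r - 1) * L) ≤
      2 * (d + 1) * c * Real.log ((M : ℝ) ^ d) * M / L := by
  have hM₁ : (1 : ℝ) ≤ M := by exact_mod_cast hM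
  have hlog : 0 ≤ Real.log ((M : ℝ) ^ d) := Real.log_nonneg (one_le_pow₀ hM₁)
  have hLM' : (L : ℝ) ≤ (M : ℝ) ^ (r - 1) * M * (M : ℝ) ^ (d - (r + 1)) := by
    rw [← pow_succ, ← pow_add]
    exact (Nat.cast_le.2 hLM).trans_eq (Nat.cast_pow M _) |>.trans
      (pow_le_pow_right₀ hM₁ (by omega))
  have hspread : (M : ℝ) + L / (M : ℝ) ^ (d - (r + 1)) ≤ 2 * M * (M : ℝ) ^ (r - 1) := by
    have h₁ : (M : ℝ) ≤ M * (M : ℝ) ^ (r - 1) := le_mul_of_one_le_right (by positivity)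
      (one_le_pow₀ hM₁)
    have h₂ : (L : ℝ) / (M : ℝ) ^ (d - (r + 1)) ≤ M * (M : ℝ) ^ (r - 1) := by
      rw [div_le_iff₀ (by positivity)]; linarith
    linarith
  calc (#{j ∈ range L | delta d (x j) v (j / M % d) ≤ r + 1} : ℝ) / ((M : ℝ) ^ (r - 1) * L)
      ≤ ((r + 1 : ℕ) + 1) * (c * Real.log ((M : ℝ) ^ d) * (M + L / (M : ℝ) ^ (d - (r + 1)))) /
          ((M : ℝ) ^ (r - 1) * L) := by
        gcongr
        exact card_delta_le_of_isGridSparse hsp hv hc hM hr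
    _ ≤ (d + 1) * (c * Real.log ((M : ℝ) ^ d) * (2 * M * (M : ℝ) ^ (r - 1))) /
          ((M : ℝ) ^ (r - 1) * L) := by
        gcongr
        exact_mod_cast hr
    _ = 2 * (d + 1) * c * Real.log ((M : ℝ) ^ d) * M / L := by
        field_simp

theorem one_le_and_mul_self_le_of_eq_floor {M d L : ℕ} (hM : 100 ≤ M) (hd : 2 ≤ d)
    (hL : L = ⌊√((M : ℝ) ^ d) / 100⌋₊) : 1 ≤ L ∧ L * L ≤ M ^ d := by
  have hMd : (100 : ℝ) ^ 2 ≤ (M : ℝ) ^ d :=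
    calc (100 : ℝ) ^ 2 ≤ (M : ℝ) ^ 2 := by gcongr; exact_mod_cast hM
      _ ≤ (M : ℝ) ^ d := pow_le_pow_right₀ (by exact_mod_cast (by omega : 1 ≤ M)) hd
  have hsqrt : (100 : ℝ) ≤ √((M : ℝ) ^ d) := (Real.le_sqrt (by norm_num) (by positivity)).2 hMd
  have hLsqrt : (L : ℝ) ≤ √((M : ℝ) ^ d) := by
    rw [hL]
    exact (Nat.floor_le (by positivity)).trans (div_le_self (by positivity) (by norm_num))
  refine ⟨hL ▸ Nat.le_floor (by push_cast; linarith), ?_⟩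
  have : (L : ℝ) * L ≤ (M : ℝ) ^ d :=
    (mul_self_le_mul_self (by positivity) hLsqrt).trans_eq (Real.mul_self_sqrt (by positivity))
  exact_mod_cast this

theorem div_pow_pred_le {d M L : ℕ} {ℓ : ℝ} (hd : 0 < d) (hL : 0 < L) (hLL : L * L ≤ M ^ d)
    (hℓ : 1 ≤ ℓ) : (L : ℝ) / (M : ℝ) ^ (d - 1) ≤ M * ℓ / L := by
  have hM : 0 < M := Nat.pos_of_ne_zero fun h => by simp [h, hd.ne'] at hLL; omega
  rw [div_le_div_iff₀ (by positivity) (by positivity)]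
  calc (L : ℝ) * L ≤ (M : ℝ) ^ d := by exact_mod_cast hLL
    _ = M * (M : ℝ) ^ (d - 1) := by rw [← pow_succ', Nat.sub_add_cancel hd]
    _ ≤ M * ℓ * (M : ℝ) ^ (d - 1) := by
        rw [mul_right_comm]; exact le_mul_of_one_le_right (by positivity) hℓ

/-- **Sparse grid snakes are unlikely to hit any given vertex when they flick their
tails.** Fix `d ≥ 3`. For every `c > 0` there is a `c' > 0` (depending only on `c` and
`d`) such that for all sufficiently large `N = M^d`, with `L = ⌊√N/100⌋`: if `x` is a
`c`-sparse snake in the support of the grid snake distribution `D_{h,L}` on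
`{0,…,M-1}^d`, `j` is drawn uniformly from `{0,…,L-1}`, and `Y` is obtained from `x`
by flicking the tail at `j`, then for every vertex `v`,
`Pr_{j,Y}[v ∈ Y[j]] ≤ c'·(N^{1/d}·log N)/L`. -/
theorem stmt_14 (d : ℕ) (hd : 3 ≤ d) :
    ∀ c > (0 : ℝ), ∃ c' > (0 : ℝ), ∃ M₀ : ℕ, ∀ M : ℕ, M₀ ≤ M →
      ∀ h : Fin d → ℕ, (∀ i, h i < M) →
        ∀ L : ℕ, L = ⌊Real.sqrt ((M : ℝ) ^ d) / 100⌋₊ →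
          ∀ x : ℕ → Fin d → ℕ,
            (∃ u : ℕ → ℕ, (∀ T, u T < M) ∧ ∀ t < L, x t = gridSnake M h u t) →
            IsGridSparse c d M L x →
            ∀ v : Fin d → ℕ, (∀ i, v i < M) →
              unifPr (fun σ : Fin L × (Fin L → Fin M) =>
                  ∃ t ≤ (σ.1 : ℕ), gridFlick M x (σ.1 : ℕ) (extValsN σ.2) t = v)
                ≤ c' * ((M : ℝ) * Real.log ((M : ℝ) ^ d)) / L := by
  intro c hc
  refine ⟨2 * d * (d + 1) * c + 1, by positivity, 100,
    fun M hM h hh L hL x ⟨u, hu, hxu⟩ hsp v hv => ?_⟩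
  have : NeZero d := ⟨by omega⟩
  obtain ⟨hL₁, hLL⟩ := one_le_and_mul_self_le_of_eq_floor hM (by omega) hL
  have hLM : L ≤ M ^ (d - 1) := Nat.mul_self_le_mul_self_iff.1 <| hLL.trans <| by
    rw [← pow_add]; exact Nat.pow_le_pow_right (by omega) (by omega)
  have hx : ∀ j < L, ∀ i, x j i < M := fun j hj i => hxu j hj ▸ gridSnake_lt hh hu j i
  have hlog : 1 ≤ Real.log ((M : ℝ) ^ d) := by
    rw [Real.le_log_iff_exp_le (by positivity)]
    have : (100 : ℝ) ≤ (M : ℝ) ^ d := by exact_mod_cast (Nat.le_self_pow (by omega) M).trans' hM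
    linarith [Real.exp_one_lt_d9]
  calc _ ≤ L / (M : ℝ) ^ (d - 1) + ∑ r ∈ range d,
        (#{j ∈ range L | delta d (x j) v (j / M % d) ≤ r + 1} : ℝ) / ((M : ℝ) ^ (r - 1) * L) :=
        unifPr_flick_hit_le (by omega) hL₁ hx
    _ ≤ M * Real.log ((M : ℝ) ^ d) / L + ∑ _r ∈ range d,
        2 * (d + 1) * c * Real.log ((M : ℝ) ^ d) * M / L :=
        add_le_add (div_pow_pred_le (by omega) hL₁ hLL hlog) <| sum_le_sum fun r hr =>
          card_delta_div_le_of_isGridSparse hsp hv hc.le (by omega) hL₁ hLM (mem_range.1 hr)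
    _ = _ := by
        rw [sum_const, card_range, nsmul_eq_mul]
        ring
end
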